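/- Let ℓ ≥ 2, q = 2^ℓ, and let r be an integer with 1 ≤ r < q/2. Then the cardinalities of the sets S_t satisfy the recursions: |S_0(ℓ; r)| = 3·|S_0(ℓ−1; r)| + |S_1(ℓ−1; r)|, |S_1(ℓ; r)| = |S_0(ℓ−1; r)| + |S_1(ℓ−1; r)| + |S_2(ℓ−1; r)|, and |S_2(ℓ; r)| = |S_2(ℓ−1; r)|. -/

import Mathlib

/-- `u ≤₂ v`: every binary digit of `u` is at most the corresponding binary digit
of `v` (the 2-shadow relation). -/
def le2 (u v : ℕ) : Prop := ∀ k, u.testBit k = true → v.testBit k = true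

/-- The set `S_t(ℓ; r)` of pairs `(a, b)` with `0 ≤ a, b ≤ 2^ℓ − 1` for which there exist
`i ≤₂ b`, `j ≤₂ (b − i)` and `1 ≤ r' ≤ r` with `2i + j + a = (t+1)·2^ℓ − r'`. -/
def Sset (ℓ r t : ℕ) : Set (ℕ × ℕ) :=
  {p | p.1 ≤ 2 ^ ℓ - 1 ∧ p.2 ≤ 2 ^ ℓ - 1 ∧
    ∃ i j r' : ℕ, le2 i p.2 ∧ le2 j (p.2 - i) ∧ 1 ≤ r' ∧ r' ≤ r ∧
      2 * i + j + p.1 = (t + 1) * 2 ^ ℓ - r'}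

/-!
Write `ℓ = m + 1`, `a = 2^m α + a₀`, `b = 2^m β + b₀` with digits `α, β ≤ 1`. The values of
`2i + j` admissible for `b` are exactly `2^m c + s₀` with `c ≤ 2β` and `s₀` admissible for `b₀`,
so `(a, b) ∈ S_t(m + 1)` iff `(a₀, b₀) ∈ S_u(m)` for some `u` with `u + c + α = 2t + 1`.
An admissible value `s₀ ≥ 2^m` stays admissible after subtracting `2^m` (a carry argument on
the top digit), hence `S_{u+1}(m) ⊆ S_u(m)` and only the least `u`, namely
`2t + 1 - min (α + 2β) (2t + 1)`, matters. Finally `2i + j + a < 3·2^m` at level `m`, so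
`S_u(m) = ∅` for `u ≥ 3` once `r ≤ 2^m`. Summing over the four digit pairs `(α, β)` gives the
three recursions.
-/

lemma exists_eq_two_pow_mul_add (m n : ℕ) : ∃ q, ∃ n₀ < 2 ^ m, n = 2 ^ m * q + n₀ :=
  ⟨n / 2 ^ m, n % 2 ^ m, Nat.mod_lt _ (by positivity), (Nat.div_add_mod n _).symm⟩

lemma two_pow_mul_add_div {m q n : ℕ} (hn : n < 2 ^ m) : (2 ^ m * q + n) / 2 ^ m = q := by
  rw [Nat.mul_add_div (by positivity), Nat.div_eq_of_lt hn, add_zero]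

lemma two_pow_mul_add_mod {m q n : ℕ} (hn : n < 2 ^ m) : (2 ^ m * q + n) % 2 ^ m = n := by
  rw [Nat.mul_add_mod, Nat.mod_eq_of_lt hn]

lemma le_one_of_two_pow_mul_add_lt {m q n : ℕ} (h : 2 ^ m * q + n < 2 ^ (m + 1)) : q ≤ 1 := by
  by_contra! hq
  have := Nat.mul_le_mul_left (2 ^ m) hq
  rw [pow_succ] at h
  omega

lemma le2.le {u v : ℕ} (h : le2 u v) : u ≤ v := Nat.le_of_testBit h

lemma le2_zero_left (v : ℕ) : le2 0 v := by simp [le2]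

lemma le2_iff_div_mod (m x b : ℕ) :
    le2 x b ↔ le2 (x / 2 ^ m) (b / 2 ^ m) ∧ le2 (x % 2 ^ m) (b % 2 ^ m) := by
  simp only [le2, Nat.testBit_div_two_pow, Nat.testBit_mod_two_pow, Bool.and_eq_true,
    decide_eq_true_eq]
  constructor
  · intro h
    exact ⟨fun k => h (k + m), fun k hk => ⟨hk.1, h k hk.2⟩⟩
  · rintro ⟨hdiv, hmod⟩ k hk
    by_cases hkm : k < m
    · exact (hmod k ⟨hkm, hk⟩).2
    · rw [← Nat.sub_add_cancel (not_lt.1 hkm)] at hk ⊢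
      exact hdiv _ hk

lemma le2_two_pow_mul_add_iff {m ξ β x b : ℕ} (hx : x < 2 ^ m) (hb : b < 2 ^ m) :
    le2 (2 ^ m * ξ + x) (2 ^ m * β + b) ↔ le2 ξ β ∧ le2 x b := by
  rw [le2_iff_div_mod m, two_pow_mul_add_div hx, two_pow_mul_add_div hb,
    two_pow_mul_add_mod hx, two_pow_mul_add_mod hb]

lemma le2_iff_le_of_le_one {ξ β : ℕ} (hβ : β ≤ 1) : le2 ξ β ↔ ξ ≤ β := by
  refine ⟨le2.le, fun h => ?_⟩
  obtain rfl | rfl : ξ = 0 ∨ ξ = β := by omega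
  exacts [le2_zero_left β, fun _ h => h]

def shadowSums (b : ℕ) : Set ℕ := {s | ∃ i j, le2 i b ∧ le2 j (b - i) ∧ 2 * i + j = s}

lemma zero_mem_shadowSums (b : ℕ) : 0 ∈ shadowSums b :=
  ⟨0, 0, le2_zero_left b, le2_zero_left _, rfl⟩

lemma le_two_mul_of_mem_shadowSums {s b : ℕ} (hs : s ∈ shadowSums b) : s ≤ 2 * b := by
  obtain ⟨i, j, hi, hj, rfl⟩ := hs
  have := hi.le
  have := hj.le
  omega

lemma mul_add_sub_mul_add {n q q' x x' : ℕ} (hq : q' ≤ q) (hx : x' ≤ x) :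
    n * q + x - (n * q' + x') = n * (q - q') + (x - x') := by
  have := Nat.mul_le_mul_left n hq
  rw [Nat.mul_sub]
  omega

lemma mem_shadowSums_two_pow_mul_add_iff {m β b s : ℕ} (hβ : β ≤ 1) (hb : b < 2 ^ m) :
    s ∈ shadowSums (2 ^ m * β + b) ↔
      ∃ c ≤ 2 * β, ∃ s₀ ∈ shadowSums b, s = 2 ^ m * c + s₀ := by
  constructor
  · rintro ⟨i, j, hi, hj, rfl⟩
    obtain ⟨ι, i₀, hi₀, rfl⟩ := exists_eq_two_pow_mul_add m i
    obtain ⟨κ, j₀, hj₀, rfl⟩ := exists_eq_two_pow_mul_add m j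
    obtain ⟨hιβ, hi₀b⟩ := (le2_two_pow_mul_add_iff hi₀ hb).1 hi
    rw [le2_iff_le_of_le_one hβ] at hιβ
    rw [mul_add_sub_mul_add hιβ hi₀b.le,
      le2_two_pow_mul_add_iff hj₀ (by omega), le2_iff_le_of_le_one (by omega)] at hj
    exact ⟨2 * ι + κ, by omega, 2 * i₀ + j₀, ⟨i₀, j₀, hi₀b, hj.2, rfl⟩, by ring⟩
  · rintro ⟨c, hc, s₀, ⟨i₀, j₀, hi₀, hj₀, rfl⟩, rfl⟩
    have hi₀m : i₀ < 2 ^ m := by have := hi₀.le; omega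
    have hj₀m : j₀ < 2 ^ m := by have := hj₀.le; omega
    have hcβ : c / 2 ≤ β := by omega
    refine ⟨2 ^ m * (c / 2) + i₀, 2 ^ m * (c % 2) + j₀, ?_, ?_, ?_⟩
    · exact (le2_two_pow_mul_add_iff hi₀m hb).2 ⟨(le2_iff_le_of_le_one hβ).2 hcβ, hi₀⟩
    · rw [mul_add_sub_mul_add hcβ hi₀.le, le2_two_pow_mul_add_iff hj₀m (by omega),
        le2_iff_le_of_le_one (by omega)]
      exact ⟨by omega, hj₀⟩
    · conv_rhs => rw [← Nat.div_add_mod c 2]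
      ring

lemma sub_two_pow_mem_shadowSums {m b s : ℕ} (hb : b < 2 ^ m) (hs : s ∈ shadowSums b)
    (hms : 2 ^ m ≤ s) : s - 2 ^ m ∈ shadowSums b := by
  induction m generalizing b s with
  | zero =>
    have := le_two_mul_of_mem_shadowSums hs
    simp only [pow_zero] at hb hms
    omega
  | succ m ih =>
    obtain ⟨β, b₀, hb₀, rfl⟩ := exists_eq_two_pow_mul_add m b
    have hβ := le_one_of_two_pow_mul_add_lt hb
    obtain ⟨c, hc, s₀, hs₀, rfl⟩ := (mem_shadowSums_two_pow_mul_add_iff hβ hb₀).1 hs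
    have := le_two_mul_of_mem_shadowSums hs₀
    rw [mem_shadowSums_two_pow_mul_add_iff hβ hb₀]
    rw [pow_succ] at hms ⊢
    rcases (show c = 0 ∨ c = 1 ∨ c = 2 by omega) with rfl | rfl | rfl
    · omega
    · exact ⟨0, by omega, s₀ - 2 ^ m, ih hb₀ hs₀ (by omega), by omega⟩
    · exact ⟨0, by omega, s₀, hs₀, by omega⟩

lemma mem_Sset_iff {ℓ r t a b : ℕ} :
    (a, b) ∈ Sset ℓ r t ↔ a < 2 ^ ℓ ∧ b < 2 ^ ℓ ∧
      ∃ s ∈ shadowSums b, (t + 1) * 2 ^ ℓ ≤ s + a + r ∧ s + a < (t + 1) * 2 ^ ℓ := by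
  have : 0 < 2 ^ ℓ := by positivity
  have : 0 < (t + 1) * 2 ^ ℓ := by positivity
  simp only [Sset, Set.mem_ofPred_eq, shadowSums]
  constructor
  · rintro ⟨ha, hb, i, j, r', hi, hj, hr'₁, hr'₂, h⟩
    exact ⟨by omega, by omega, _, ⟨i, j, hi, hj, rfl⟩, by omega, by omega⟩
  · rintro ⟨ha, hb, _, ⟨i, j, hi, hj, rfl⟩, hlo, hhi⟩
    exact ⟨by omega, by omega, i, j, (t + 1) * 2 ^ ℓ - (2 * i + j + a), hi, hj,
      by omega, by omega, by omega⟩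

lemma Sset_finite (ℓ r t : ℕ) : (Sset ℓ r t).Finite :=
  ((Set.finite_Iic _).prod (Set.finite_Iic _)).subset fun _ hp => ⟨hp.1, hp.2.1⟩

instance (ℓ r t : ℕ) : Finite (Sset ℓ r t) := (Sset_finite ℓ r t).to_subtype

lemma Sset_succ_subset (ℓ r t : ℕ) : Sset ℓ r (t + 1) ⊆ Sset ℓ r t := by
  rintro ⟨a, b⟩ h
  rw [mem_Sset_iff] at h ⊢
  obtain ⟨ha, hb, s, hs, hlo, hhi⟩ := h
  rw [add_one_mul (t + 1)] at hlo hhi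
  refine ⟨ha, hb, ?_⟩
  by_cases hsℓ : 2 ^ ℓ ≤ s
  · exact ⟨s - 2 ^ ℓ, sub_two_pow_mem_shadowSums hb hs hsℓ, by omega, by omega⟩
  · have := Nat.le_mul_of_pos_left (2 ^ ℓ) (show 0 < t + 1 by omega)
    exact ⟨0, zero_mem_shadowSums b, by omega, by omega⟩

lemma Sset_antitone (ℓ r : ℕ) : Antitone (Sset ℓ r) :=
  antitone_nat_of_succ_le (Sset_succ_subset ℓ r)

lemma Sset_eq_empty {ℓ r t : ℕ} (hr : r ≤ 2 ^ ℓ) (ht : 3 ≤ t) : Sset ℓ r t = ∅ := by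
  refine Set.eq_empty_of_forall_notMem fun ⟨a, b⟩ h => ?_
  obtain ⟨ha, hb, s, hs, hlo, -⟩ := mem_Sset_iff.1 h
  have := le_two_mul_of_mem_shadowSums hs
  have := Nat.mul_le_mul_right (2 ^ ℓ) (show 4 ≤ t + 1 by omega)
  omega

lemma add_one_mul_two_pow_succ {m t k d : ℕ} (h : k + d = 2 * t + 1) :
    (t + 1) * 2 ^ (m + 1) = (k + 1) * 2 ^ m + 2 ^ m * d := by
  calc (t + 1) * 2 ^ (m + 1) = (2 * t + 1 + 1) * 2 ^ m := by ring
    _ = (k + 1) * 2 ^ m + 2 ^ m * d := by rw [← h]; ring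

def residualIndex (t α β : ℕ) : ℕ := 2 * t + 1 - min (α + 2 * β) (2 * t + 1)

lemma mem_Sset_succ_iff {m r t α β a b : ℕ} (hα : α ≤ 1) (hβ : β ≤ 1) (ha : a < 2 ^ m)
    (hb : b < 2 ^ m) :
    (2 ^ m * α + a, 2 ^ m * β + b) ∈ Sset (m + 1) r t ↔
      (a, b) ∈ Sset m r (residualIndex t α β) := by
  rw [mem_Sset_iff, mem_Sset_iff]
  constructor
  · rintro ⟨-, -, s, hs, hlo, hhi⟩
    obtain ⟨c, hc, s₀, hs₀, rfl⟩ := (mem_shadowSums_two_pow_mul_add_iff hβ hb).1 hs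
    have hd : c + α ≤ 2 * t + 1 := by
      have : (t + 1) * 2 ^ (m + 1) = 2 ^ m * (2 * t + 2) := by ring
      have : 2 ^ m * (c + α) < 2 ^ m * (2 * t + 2) := by rw [Nat.mul_add]; omega
      exact Nat.lt_succ_iff.1 (Nat.lt_of_mul_lt_mul_left this)
    rw [add_one_mul_two_pow_succ (Nat.sub_add_cancel hd), Nat.mul_add] at hlo hhi
    have : (a, b) ∈ Sset m r (2 * t + 1 - (c + α)) :=
      mem_Sset_iff.2 ⟨ha, hb, s₀, hs₀, by omega, by omega⟩
    exact mem_Sset_iff.1 (Sset_antitone m r (by unfold residualIndex; omega) this)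
  · rintro ⟨-, -, s₀, hs₀, hlo, hhi⟩
    have hk : residualIndex t α β + min (α + 2 * β) (2 * t + 1) = 2 * t + 1 := by
      unfold residualIndex; omega
    have := Nat.mul_le_mul_left (2 ^ m) hα
    have := Nat.mul_le_mul_left (2 ^ m) hβ
    refine ⟨by rw [pow_succ]; omega, by rw [pow_succ]; omega,
      2 ^ m * (min (α + 2 * β) (2 * t + 1) - α) + s₀,
      (mem_shadowSums_two_pow_mul_add_iff hβ hb).2 ⟨_, by omega, s₀, hs₀, rfl⟩, ?_⟩
    have := Nat.mul_le_mul_left (2 ^ m) (show α ≤ min (α + 2 * β) (2 * t + 1) by omega)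
    rw [add_one_mul_two_pow_succ hk, Nat.mul_sub]
    omega

def joinDigits (m : ℕ) (x : (Fin 2 × Fin 2) × (ℕ × ℕ)) : ℕ × ℕ :=
  (2 ^ m * x.1.1 + x.2.1, 2 ^ m * x.1.2 + x.2.2)

lemma two_pow_mul_add_inj {m q q' n n' : ℕ} (hn : n < 2 ^ m) (hn' : n' < 2 ^ m)
    (h : 2 ^ m * q + n = 2 ^ m * q' + n') : q = q' ∧ n = n' :=
  ⟨by rw [← two_pow_mul_add_div (q := q) hn, h, two_pow_mul_add_div hn'],
    by rw [← two_pow_mul_add_mod (q := q) hn, h, two_pow_mul_add_mod hn']⟩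

lemma bijOn_joinDigits (m r t : ℕ) :
    Set.BijOn (joinDigits m) {x | x.2 ∈ Sset m r (residualIndex t x.1.1 x.1.2)}
      (Sset (m + 1) r t) := by
  refine ⟨?_, ?_, ?_⟩
  · rintro ⟨⟨α, β⟩, ⟨a, b⟩⟩ h
    obtain ⟨ha, hb, -⟩ := mem_Sset_iff.1 h
    exact (mem_Sset_succ_iff (by omega) (by omega) ha hb).2 h
  · rintro ⟨⟨α, β⟩, ⟨a, b⟩⟩ h ⟨⟨α', β'⟩, ⟨a', b'⟩⟩ h' heq
    obtain ⟨ha, hb, -⟩ := mem_Sset_iff.1 h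
    obtain ⟨ha', hb', -⟩ := mem_Sset_iff.1 h'
    simp only [joinDigits, Prod.mk.injEq] at heq
    obtain ⟨hα, rfl⟩ := two_pow_mul_add_inj ha ha' heq.1
    obtain ⟨hβ, rfl⟩ := two_pow_mul_add_inj hb hb' heq.2
    rw [Fin.ext hα, Fin.ext hβ]
  · rintro ⟨a, b⟩ h
    obtain ⟨ha, hb, -⟩ := mem_Sset_iff.1 h
    obtain ⟨α, a₀, ha₀, rfl⟩ := exists_eq_two_pow_mul_add m a
    obtain ⟨β, b₀, hb₀, rfl⟩ := exists_eq_two_pow_mul_add m b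
    have hα := le_one_of_two_pow_mul_add_lt ha
    have hβ := le_one_of_two_pow_mul_add_lt hb
    exact ⟨((⟨α, by omega⟩, ⟨β, by omega⟩), (a₀, b₀)),
      (mem_Sset_succ_iff hα hβ ha₀ hb₀).1 h, rfl⟩

lemma card_Sset_succ (m r t : ℕ) :
    Nat.card (Sset (m + 1) r t) =
      ∑ q : Fin 2 × Fin 2, Nat.card (Sset m r (residualIndex t q.1 q.2)) := by
  rw [← Nat.card_congr (bijOn_joinDigits m r t).equiv, ← Nat.card_sigma]
  exact Nat.card_congr
    (Equiv.subtypeProdEquivSigmaSubtype fun (q : Fin 2 × Fin 2) (p : ℕ × ℕ) =>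
      p ∈ Sset m r (residualIndex t q.1 q.2))

theorem stmt_13_general (ℓ r : ℕ) (hℓ : 2 ≤ ℓ) (hr2 : 2 * r < 2 ^ ℓ) :
    Nat.card ↥(Sset ℓ r 0) =
        3 * Nat.card ↥(Sset (ℓ - 1) r 0) + Nat.card ↥(Sset (ℓ - 1) r 1) ∧
      Nat.card ↥(Sset ℓ r 1) =
        Nat.card ↥(Sset (ℓ - 1) r 0) + Nat.card ↥(Sset (ℓ - 1) r 1) +
          Nat.card ↥(Sset (ℓ - 1) r 2) ∧
      Nat.card ↥(Sset ℓ r 2) = Nat.card ↥(Sset (ℓ - 1) r 2) := by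
  obtain ⟨m, rfl⟩ : ∃ m, ℓ = m + 1 := ⟨ℓ - 1, by omega⟩
  have hr : r ≤ 2 ^ m := by rw [pow_succ] at hr2; omega
  have hS (t : ℕ) (ht : 3 ≤ t) : Nat.card (Sset m r t) = 0 := by
    rw [Sset_eq_empty hr ht]; exact Nat.card_of_isEmpty
  simp only [card_Sset_succ, Fintype.sum_prod_type, Fin.sum_univ_two, residualIndex,
    Fin.val_zero, Fin.val_one, Nat.add_sub_cancel]
  norm_num [hS]
  omega

/-- Recursions for the cardinalities of `S₀, S₁, S₂` when
`1 ≤ r < 2^ℓ/2`. -/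
theorem stmt_13 (ℓ r : ℕ) (hℓ : 2 ≤ ℓ) (hr1 : 1 ≤ r) (hr2 : 2 * r < 2 ^ ℓ) :
    Nat.card ↥(Sset ℓ r 0) =
        3 * Nat.card ↥(Sset (ℓ - 1) r 0) + Nat.card ↥(Sset (ℓ - 1) r 1) ∧
      Nat.card ↥(Sset ℓ r 1) =
        Nat.card ↥(Sset (ℓ - 1) r 0) + Nat.card ↥(Sset (ℓ - 1) r 1) +
          Nat.card ↥(Sset (ℓ - 1) r 2) ∧
      Nat.card ↥(Sset ℓ r 2) = Nat.card ↥(Sset (ℓ - 1) r 2) :=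
  stmt_13_general ℓ r hℓ hr2
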